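/- arXiv:2112.10631 — 3 statements merged into one kernel-verified Lean document; each statement's English description precedes it below -/
import Mathlib

section
/- Let r ∈ C²((0,1]) ∩ C([0,1]) with r'(R) > 0 on (0,1] be a solution of the radial equilibrium equation with r(0) > 0, and assume δ(R) = r'(R)(r(R)/R)^{n−1} is bounded on (0,1]. Then r''(R) ≥ 0 for all R ∈ (0,1], i.e. r is convex. -/
/-!
Write `v = r/R`. Differentiating the flux in the equilibrium equation, the `h'` terms cancel and
one is left with `A r'' = (n-1)(v - r') B` for explicit `A, B > 0`; thus `r''` has the sign of
`v - r'`. At the cavity `v → ∞` while `δ = r' v^{n-1}` stays bounded, so `r' < v` near `R = 0`.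
Finally `w = r' - v` satisfies `w' = r'' - w/R < 0` wherever `w > 0`, so `w` never becomes
positive, and `r'' ≥ 0` everywhere.
-/

open Real MeasureTheory Filter Set
open scoped ENNReal NNReal

noncomputable section

/-- Radial stored energy `Φ(q, v, …, v) = (κ/n)(qⁿ + (n−1)vⁿ) + h(q v^{n−1})`,
the restriction of `Φ(v₁,…,vₙ) = (κ/n)(v₁ⁿ+⋯+vₙⁿ) + h(v₁⋯vₙ)` to points
`(q, v, …, v)`. -/
def Phi (n : ℕ) (κ : ℝ) (h : ℝ → ℝ) (q v : ℝ) : ℝ :=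
  (κ / n) * (q ^ n + ((n : ℝ) - 1) * v ^ n) + h (q * v ^ (n - 1))

/-- `Φ_{,1}(q, v, …, v) = κ q^{n−1} + v^{n−1} h'(q v^{n−1})`. -/
def Phi1 (n : ℕ) (κ : ℝ) (h' : ℝ → ℝ) (q v : ℝ) : ℝ :=
  κ * q ^ (n - 1) + v ^ (n - 1) * h' (q * v ^ (n - 1))

/-- `Φ_{,2}(q, v, …, v) = κ v^{n−1} + q v^{n−2} h'(q v^{n−1})`. -/
def Phi2 (n : ℕ) (κ : ℝ) (h' : ℝ → ℝ) (q v : ℝ) : ℝ :=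
  κ * v ^ (n - 1) + q * v ^ (n - 2) * h' (q * v ^ (n - 1))

/-- Radial Cauchy stress `T(q,v) = v^{1−n} Φ_{,1}(q,v,…,v) = κ(q/v)^{n−1} + h'(q v^{n−1})`. -/
def Tstress (n : ℕ) (κ : ℝ) (h' : ℝ → ℝ) (q v : ℝ) : ℝ :=
  κ * (q / v) ^ (n - 1) + h' (q * v ^ (n - 1))

/-- The determinant function `δ(R) = r'(R) (r(R)/R)^{n−1}`. -/
def del (n : ℕ) (r r' : ℝ → ℝ) (R : ℝ) : ℝ :=
  r' R * (r R / R) ^ (n - 1)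

/-- Hypotheses on `h : (0,∞) → [0,∞)`: it is `C²` with derivative `h'` and second
derivative `h''`, `h'' > 0`, `h(d) → ∞` as `d → 0⁺`, `h(d)/d → ∞` as `d → ∞`,
`h'(d) → −∞` as `d → 0⁺` and `h'(d) → ∞` as `d → ∞`. -/
structure GoodH (h h' h'' : ℝ → ℝ) : Prop where
  nonneg : ∀ d : ℝ, 0 < d → 0 ≤ h d
  deriv1 : ∀ d : ℝ, 0 < d → HasDerivAt h (h' d) d
  deriv2 : ∀ d : ℝ, 0 < d → HasDerivAt h' (h'' d) d
  cont2 : ContinuousOn h'' (Set.Ioi 0)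
  hpp_pos : ∀ d : ℝ, 0 < d → 0 < h'' d
  lim_zero : Tendsto h (nhdsWithin 0 (Set.Ioi 0)) atTop
  lim_growth : Tendsto (fun d => h d / d) atTop atTop
  dlim_zero : Tendsto h' (nhdsWithin 0 (Set.Ioi 0)) atBot
  dlim_top : Tendsto h' atTop atTop

/-- `r ∈ C²((0,1])`, with `r, r' > 0` on `(0,1]`, solving the radial equilibrium
equation `(d/dR)[R^{n−1} Φ_{,1}(r(R))] = (n−1) R^{n−2} Φ_{,2}(r(R))`. -/
structure RadialSol (n : ℕ) (κ : ℝ) (h' : ℝ → ℝ) (r r' r'' : ℝ → ℝ) : Prop where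
  pos : ∀ R ∈ Set.Ioc (0:ℝ) 1, 0 < r R
  derivPos : ∀ R ∈ Set.Ioc (0:ℝ) 1, 0 < r' R
  hasDeriv : ∀ R ∈ Set.Ioc (0:ℝ) 1, HasDerivWithinAt r (r' R) (Set.Ioc 0 1) R
  hasDeriv2 : ∀ R ∈ Set.Ioc (0:ℝ) 1, HasDerivWithinAt r' (r'' R) (Set.Ioc 0 1) R
  cont2 : ContinuousOn r'' (Set.Ioc 0 1)
  equil : ∀ R ∈ Set.Ioc (0:ℝ) 1,
    HasDerivWithinAt (fun s => s ^ (n - 1) * Phi1 n κ h' (r' s) (r s / s))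
      (((n : ℝ) - 1) * R ^ (n - 2) * Phi2 n κ h' (r' R) (r R / R)) (Set.Ioc 0 1) R

open scoped Topology

theorem HasDerivWithinAt.div_id {f : ℝ → ℝ} {f' x : ℝ} {s : Set ℝ}
    (hf : HasDerivWithinAt f f' s x) (hx : x ≠ 0) :
    HasDerivWithinAt (fun t => f t / t) ((f' - f x / x) / x) s x := by
  refine (hf.fun_div (hasDerivWithinAt_id x s) hx).congr_deriv ?_
  simp only [id_eq, mul_one]
  field_simp

theorem hasDerivWithinAt_Phi1_comp {m : ℕ} {κ : ℝ} {h' : ℝ → ℝ} {q v : ℝ → ℝ}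
    {q₁ v₁ b x : ℝ} {s : Set ℝ}
    (hq : HasDerivWithinAt q q₁ s x) (hv : HasDerivWithinAt v v₁ s x)
    (hh' : HasDerivAt h' b (q x * v x ^ (m + 1))) :
    HasDerivWithinAt (fun t => Phi1 (m + 2) κ h' (q t) (v t))
      (κ * ((m + 1) * q x ^ m * q₁) + ((m + 1) * v x ^ m * v₁ * h' (q x * v x ^ (m + 1))
        + v x ^ (m + 1) * (b * (q₁ * v x ^ (m + 1) + q x * ((m + 1) * v x ^ m * v₁)))))
      s x := by
  have hd := hq.fun_mul (hv.fun_pow (m + 1))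
  refine (((hq.fun_pow (m + 1)).const_mul κ).fun_add
    ((hv.fun_pow (m + 1)).fun_mul (hh'.comp_hasDerivWithinAt x hd))).congr_deriv ?_
  simp only [Function.comp_apply]
  push_cast
  ring

theorem image_nonpos_of_deriv_nonpos_of_pos {f f' : ℝ → ℝ} {a b : ℝ}
    (hf : ContinuousOn f (Icc a b)) (hf' : ∀ x ∈ Ioo a b, HasDerivAt f (f' x) x)
    (ha : f a ≤ 0) (hf'_nonpos : ∀ x ∈ Ioo a b, 0 < f x → f' x ≤ 0) :
    ∀ x ∈ Icc a b, f x ≤ 0 := by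
  intro x hx
  by_contra! hfx
  have hclosed : IsClosed (Icc a x ∩ f ⁻¹' Iic 0) :=
    (hf.mono (Icc_subset_Icc_right hx.2)).preimage_isClosed_of_isClosed isClosed_Icc isClosed_Iic
  obtain ⟨c, ⟨⟨hac, hcx⟩, hfc⟩, hc_max⟩ :=
    (isCompact_Icc.of_isClosed_subset hclosed inter_subset_left).exists_isGreatest
      ⟨a, ⟨left_mem_Icc.2 hx.1, ha⟩⟩
  have hpos : ∀ y ∈ Ioo c x, 0 < f y := fun y hy =>
    not_le.1 fun hy' => hy.1.not_ge (hc_max ⟨⟨hac.trans hy.1.le, hy.2.le⟩, hy'⟩)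
  have hsub : Icc c x ⊆ Icc a b := Icc_subset_Icc hac hx.2
  have hanti : AntitoneOn f (Icc c x) := by
    refine antitoneOn_of_hasDerivWithinAt_nonpos (convex_Icc c x) (hf.mono hsub) ?_ ?_
      (f' := f')
    · rw [interior_Icc]
      exact fun y hy => (hf' y ⟨hac.trans_lt hy.1, hy.2.trans_le hx.2⟩).hasDerivWithinAt
    · rw [interior_Icc]
      exact fun y hy => hf'_nonpos y ⟨hac.trans_lt hy.1, hy.2.trans_le hx.2⟩ (hpos y hy)
  have := hanti ⟨le_rfl, hcx⟩ ⟨hcx, le_rfl⟩ hcx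
  exact (hfx.trans_le this).not_ge hfc

theorem eventually_lt_div_id_of_del_le {n : ℕ} {r r' : ℝ → ℝ} {M : ℝ}
    (hcont : ContinuousWithinAt r (Ici 0) 0) (hcav : 0 < r 0)
    (hM : ∀ᶠ R in 𝓝[>] 0, del n r r' R ≤ M) :
    ∀ᶠ R in 𝓝[>] 0, r' R < r R / R := by
  have hv : Tendsto (fun R => r R / R) (𝓝[>] 0) atTop := by
    simpa only [div_eq_mul_inv] using
      (hcont.mono Ioi_subset_Ici_self).tendsto.pos_mul_atTop hcav tendsto_inv_nhdsGT_zero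
  filter_upwards [hM, hv.eventually_gt_atTop (max M 1)] with R hδ hvR
  have hv0 : 0 < r R / R := zero_lt_one.trans_le ((le_max_right M 1).trans hvR.le)
  have hv1 : 1 ≤ (r R / R) ^ (n - 1) := one_le_pow₀ ((le_max_right M 1).trans hvR.le)
  refine lt_of_mul_lt_mul_right (a := (r R / R) ^ (n - 1)) ?_ (pow_nonneg hv0.le _)
  calc r' R * (r R / R) ^ (n - 1) ≤ M := hδ
    _ < r R / R := (le_max_left M 1).trans_lt hvR
    _ ≤ r R / R * (r R / R) ^ (n - 1) := le_mul_of_one_le_right hv0.le hv1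

namespace RadialSol

variable {n m : ℕ} {κ : ℝ} {h' h'' r r' r'' : ℝ → ℝ} {R : ℝ}

theorem mul_secondDeriv_eq (hr : RadialSol (m + 2) κ h' r r' r'')
    (hh' : ∀ d, 0 < d → HasDerivAt h' (h'' d) d) (hR : R ∈ Ioc (0:ℝ) 1) :
    R * (κ * (m + 1) * r' R ^ m
        + (r R / R) ^ (2 * m + 2) * h'' (r' R * (r R / R) ^ (m + 1))) * r'' R
      = (m + 1) * (r R / R - r' R) *
          (κ * ∑ i ∈ Finset.range (m + 1), (r R / R) ^ i * r' R ^ (m - i)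
            + r' R * (r R / R) ^ (2 * m + 1) * h'' (r' R * (r R / R) ^ (m + 1))) := by
  have hR0 : R ≠ 0 := hR.1.ne'
  have hd : 0 < r' R * (r R / R) ^ (m + 1) :=
    mul_pos (hr.derivPos R hR) (pow_pos (div_pos (hr.pos R hR) hR.1) _)
  have hflux := (hasDerivWithinAt_pow (m + 1) R (s := Ioc 0 1)).fun_mul
    (hasDerivWithinAt_Phi1_comp (κ := κ) (hr.hasDeriv2 R hR) ((hr.hasDeriv R hR).div_id hR0)
      (hh' _ hd))
  have hequil := (uniqueDiffOn_Ioc 0 1 R hR).eq_deriv _ hflux (hr.equil R hR)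
  have hgeom := geom_sum₂_mul (r R / R) (r' R) (m + 1)
  simp only [Phi1, Phi2, Nat.add_sub_cancel, Nat.reduceSubDiff] at hequil hgeom
  push_cast at hequil
  set v := r R / R
  set q := r' R
  have hdiv : (q - v) / R * R = q - v := div_mul_cancel₀ _ hR0
  clear_value v q
  apply mul_left_cancel₀ (pow_ne_zero m hR0)
  linear_combination hequil - (m + 1) * R ^ m * κ * hgeom
    - (m + 1) * R ^ m * (v ^ m * h' (q * v ^ (m + 1)) + q * v ^ (2 * m + 1) * h'' (q * v ^ (m + 1)))
      * hdiv

theorem exists_pos_secondDeriv_eq (hn : 2 ≤ n) (hr : RadialSol n κ h' r r' r'') (hκ : 0 ≤ κ)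
    (hh' : ∀ d, 0 < d → HasDerivAt h' (h'' d) d) (hh'' : ∀ d, 0 < d → 0 < h'' d)
    (hR : R ∈ Ioc (0:ℝ) 1) :
    ∃ C > 0, r'' R = C * (r R / R - r' R) := by
  obtain ⟨m, rfl⟩ := Nat.exists_eq_add_of_le' hn
  have hid := hr.mul_secondDeriv_eq hh' hR
  have hq := hr.derivPos R hR
  have hv := div_pos (hr.pos R hR) hR.1
  set q := r' R
  set v := r R / R
  have hb := hh'' _ (mul_pos hq (pow_pos hv (m + 1)))
  set b := h'' (q * v ^ (m + 1))
  have hA : 0 < R * (κ * (m + 1) * q ^ m + v ^ (2 * m + 2) * b) := mul_pos hR.1 (by positivity)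
  refine ⟨(m + 1) * (κ * ∑ i ∈ Finset.range (m + 1), v ^ i * q ^ (m - i)
    + q * v ^ (2 * m + 1) * b) / (R * (κ * (m + 1) * q ^ m + v ^ (2 * m + 2) * b)),
    by positivity, ?_⟩
  rw [div_mul_eq_mul_div, eq_div_iff hA.ne']
  linear_combination hid

theorem deriv_le_div_id (hn : 2 ≤ n) (hr : RadialSol n κ h' r r' r'') (hκ : 0 ≤ κ)
    (hh' : ∀ d, 0 < d → HasDerivAt h' (h'' d) d) (hh'' : ∀ d, 0 < d → 0 < h'' d)
    (hnear : ∀ᶠ R in 𝓝[>] 0, r' R < r R / R) :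
    ∀ R ∈ Ioc (0:ℝ) 1, r' R ≤ r R / R := by
  intro R₀ hR₀
  obtain ⟨a, ha_lt, ha⟩ := (hnear.and (Ioo_mem_nhdsGT hR₀.1)).exists
  have hsub : Icc a R₀ ⊆ Ioc 0 1 := fun x hx => ⟨ha.1.trans_le hx.1, hx.2.trans hR₀.2⟩
  have hderiv : ∀ x ∈ Ioc (0:ℝ) 1, HasDerivWithinAt (fun s => r' s - r s / s)
      (r'' x - (r' x - r x / x) / x) (Ioc 0 1) x :=
    fun x hx => (hr.hasDeriv2 x hx).sub ((hr.hasDeriv x hx).div_id hx.1.ne')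
  have hdecr : ∀ x ∈ Ioo a R₀, 0 < r' x - r x / x → r'' x - (r' x - r x / x) / x ≤ 0 := by
    intro x hx hpos
    obtain ⟨C, hC, hCx⟩ :=
      hr.exists_pos_secondDeriv_eq hn hκ hh' hh'' (hsub (Ioo_subset_Icc_self hx))
    rw [hCx]
    linarith [mul_pos hC hpos, div_pos hpos (ha.1.trans hx.1)]
  have := image_nonpos_of_deriv_nonpos_of_pos
    (fun x hx => (hderiv x (hsub hx)).continuousWithinAt.mono hsub)
    (fun x hx => (hderiv x (hsub (Ioo_subset_Icc_self hx))).hasDerivAt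
      (Ioc_mem_nhds (ha.1.trans hx.1) (hx.2.trans_le hR₀.2)))
    (sub_nonpos.2 ha_lt.le) hdecr R₀ (right_mem_Icc.2 ha.2.le)
  exact sub_nonpos.1 this

end RadialSol

/-- a cavitating solution of the radial equilibrium equation with
bounded determinant is convex: `r''(R) ≥ 0` on `(0,1]`. -/
theorem stmt1 (n : ℕ) (hn : 2 ≤ n) (κ : ℝ) (hκ : 0 < κ)
    (h h' h'' : ℝ → ℝ) (hh : GoodH h h' h'')
    (r r' r'' : ℝ → ℝ) (hr : RadialSol n κ h' r r' r'')
    (hcont : ContinuousOn r (Set.Icc 0 1)) (hcav : 0 < r 0)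
    (hbdd : ∃ M : ℝ, ∀ R ∈ Set.Ioc (0:ℝ) 1, del n r r' R ≤ M) :
    ∀ R ∈ Set.Ioc (0:ℝ) 1, 0 ≤ r'' R := by
  obtain ⟨M, hM⟩ := hbdd
  have hnear : ∀ᶠ R in 𝓝[>] 0, r' R < r R / R :=
    eventually_lt_div_id_of_del_le
      ((hcont 0 ⟨le_rfl, zero_le_one⟩).mono_of_mem_nhdsWithin (Icc_mem_nhdsGE zero_lt_one)) hcav
      (mem_of_superset (Ioc_mem_nhdsGT zero_lt_one) hM)
  intro R hR
  obtain ⟨C, hC, hCR⟩ := hr.exists_pos_secondDeriv_eq hn hκ.le hh.deriv2 hh.hpp_pos hR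
  rw [hCR]
  exact mul_nonneg hC.le
    (sub_nonneg.2 (hr.deriv_le_div_id hn hκ.le hh.deriv2 hh.hpp_pos hnear R hR))

end
end

section
/- Assume in addition that there exist γ > 0, d₀ > 0 and constants 0 < K₁ ≤ K₂ such that K₁/d^{γ+2} ≤ h''(d) ≤ K₂/d^{γ+2} and K₁/d^{γ} ≤ h(d) ≤ K₂/d^{γ} for all 0 < d ≤ d₀. Let r ∈ C²((0,1]) ∩ C([0,1]) with r'(R) > 0 on (0,1] be a solution of the radial equilibrium equation with r(0) > 0 and δ bounded on (0,1]. Then the integral ∫₀¹ R^{n−1} h(δ(R)) dR is finite. -/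
open Real MeasureTheory Filter Set
open scoped ENNReal NNReal

noncomputable section

/-!
Along a solution, the radial stress `T = κ (r'/v)^{n-1} + h'(δ)` satisfies `T' ≤ (n-1)κ/R`,
because the `h'` terms cancel in the equilibrium equation. Since `v ≥ r(0) > 0` and `δ` is
bounded, `r'/v = δ/vⁿ` is bounded, so `h'(δ(R)) ≥ A + (n-1)κ log R`. Near `0` the lower bound
on `h''` makes `h' + K₁/((γ+1) d^{γ+1})` increasing, whence `d^{-(γ+1)} ≲ 1 - h'(d)`, and the
upper bound on `h` gives `h(d) ≲ d^{-γ} ≲ d^{-(γ+1)}`. Hence `h(δ(R)) ≤ a - b log R`, which is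
integrable on `(0,1]`.
-/

theorem integrableOn_Ioc_of_abs_le_sub_mul_log {f : ℝ → ℝ} {a b : ℝ}
    (hf : ContinuousOn f (Ioc 0 1)) (hbound : ∀ x ∈ Ioc (0 : ℝ) 1, |f x| ≤ a - b * log x) :
    IntegrableOn f (Ioc 0 1) := by
  have hlog : IntegrableOn log (Ioc 0 1) :=
    (intervalIntegrable_iff_integrableOn_Ioc_of_le zero_le_one).1
      intervalIntegral.intervalIntegrable_log'
  refine ((integrableOn_const (by simp)).sub (hlog.const_mul b)).mono'
    (hf.aestronglyMeasurable measurableSet_Ioc) ?_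
  exact (ae_restrict_iff' measurableSet_Ioc).2 (Eventually.of_forall hbound)

theorem monotoneOn_add_mul_rpow_neg {g g' : ℝ → ℝ} {K p a : ℝ} (hp : 0 < p)
    (hg : ∀ x ∈ Ioc 0 a, HasDerivAt g (g' x) x)
    (hg' : ∀ x ∈ Ioc 0 a, K / x ^ (p + 1) ≤ g' x) :
    MonotoneOn (fun x => g x + K / p * x ^ (-p)) (Ioc 0 a) := by
  have hderiv : ∀ x ∈ Ioc 0 a,
      HasDerivAt (fun x => g x + K / p * x ^ (-p)) (g' x - K / x ^ (p + 1)) x := by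
    intro x hx
    refine ((hg x hx).add ((hasDerivAt_rpow_const (p := -p) (Or.inl hx.1.ne')).const_mul
      (K / p))).congr_deriv ?_
    rw [show -p - 1 = -(p + 1) by ring, rpow_neg hx.1.le]
    field_simp
    ring
  refine monotoneOn_of_hasDerivWithinAt_nonneg (f' := fun x => g' x - K / x ^ (p + 1))
    (convex_Ioc 0 a)
    (fun x hx => (hderiv x hx).continuousAt.continuousWithinAt) (fun x hx => ?_) (fun x hx => ?_)
  · exact (hderiv x (interior_subset hx)).hasDerivWithinAt
  · exact sub_nonneg.2 (hg' x (interior_subset hx))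

theorem GoodH.exists_le_mul_sub_deriv {h h' h'' : ℝ → ℝ} (hh : GoodH h h' h'')
    {γ d₀ K₁ K₂ : ℝ} (hγ : -1 < γ) (hd₀ : 0 < d₀) (hK₁ : 0 < K₁)
    (hpp : ∀ d : ℝ, 0 < d → d ≤ d₀ → K₁ / d ^ (γ + 2) ≤ h'' d)
    (hle : ∀ d : ℝ, 0 < d → d ≤ d₀ → h d ≤ K₂ / d ^ γ) :
    ∃ A C, 0 ≤ C ∧ ∀ d ∈ Ioc 0 d₀, h d ≤ C * (A - h' d) := by
  have hp : 0 < γ + 1 := by linarith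
  have hψ : MonotoneOn (fun x => h' x + K₁ / (γ + 1) * x ^ (-(γ + 1))) (Ioc 0 d₀) :=
    monotoneOn_add_mul_rpow_neg hp (fun x hx => hh.deriv2 x hx.1)
      (fun x hx => by simpa only [add_assoc, one_add_one_eq_two] using hpp x hx.1 hx.2)
  have hK₂ : 0 ≤ K₂ := by
    by_contra! hneg
    have := (hh.nonneg d₀ hd₀).trans (hle d₀ hd₀ le_rfl)
    linarith [div_neg_of_neg_of_pos hneg (rpow_pos_of_pos hd₀ γ)]
  refine ⟨h' d₀ + K₁ / (γ + 1) * d₀ ^ (-(γ + 1)), K₂ * d₀ * (γ + 1) / K₁, by positivity, ?_⟩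
  intro d hd
  have hmono := hψ hd (right_mem_Ioc.2 hd₀) hd.2
  have hpow : d ^ (-(γ + 1)) = (d ^ γ * d)⁻¹ := by rw [rpow_neg hd.1.le, rpow_add_one hd.1.ne']
  calc h d ≤ K₂ / d ^ γ := hle d hd.1 hd.2
    _ = K₂ * d * d ^ (-(γ + 1)) := by
        rw [hpow, ← div_eq_mul_inv, mul_div_mul_right _ _ hd.1.ne']
    _ ≤ K₂ * d₀ * d ^ (-(γ + 1)) := by
        have := rpow_nonneg hd.1.le (-(γ + 1))
        gcongr
        exact hd.2
    _ = K₂ * d₀ * (γ + 1) / K₁ * (K₁ / (γ + 1) * d ^ (-(γ + 1))) := by field_simp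
    _ ≤ K₂ * d₀ * (γ + 1) / K₁ * (h' d₀ + K₁ / (γ + 1) * d₀ ^ (-(γ + 1)) - h' d) := by
        gcongr; linarith

theorem GoodH.continuousOn {h h' h'' : ℝ → ℝ} (hh : GoodH h h' h'') : ContinuousOn h (Ioi 0) :=
  fun d hd => (hh.deriv1 d hd).continuousAt.continuousWithinAt

theorem tstress_div_eq (n : ℕ) (κ : ℝ) (h' : ℝ → ℝ) (q : ℝ) {s c : ℝ} (hs : s ≠ 0)
    (hc : c ≠ 0) :
    Tstress n κ h' q (c / s) = s ^ (n - 1) * Phi1 n κ h' q (c / s) / c ^ (n - 1) := by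
  simp only [Tstress, Phi1, div_pow]
  field_simp

namespace RadialSol

variable {n : ℕ} {κ : ℝ} {h' r r' r'' : ℝ → ℝ}

theorem hasDerivWithinAt_tstress (hr : RadialSol n κ h' r r' r'') (hn : 2 ≤ n) {x : ℝ}
    (hx : x ∈ Ioc 0 1) :
    HasDerivWithinAt (fun s => Tstress n κ h' (r' s) (r s / s))
      (((n : ℝ) - 1) * κ * (x⁻¹ - x ^ (n - 1) * r' x ^ n / r x ^ n)) (Ioc 0 1) x := by
  obtain ⟨k, rfl⟩ : ∃ k, n = k + 2 := ⟨n - 2, by omega⟩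
  have hrx := hr.pos x hx
  have hquot := (hr.equil x hx).div ((hr.hasDeriv x hx).pow (k + 1)) (pow_pos hrx _).ne'
  refine (hquot.congr (fun s hs => tstress_div_eq _ _ _ _ hs.1.ne' (hr.pos s hs).ne')
    (tstress_div_eq _ _ _ _ hx.1.ne' hrx.ne')).congr_deriv ?_
  simp only [Phi1, Phi2, div_pow, show k + 2 - 1 = k + 1 from rfl, show k + 2 - 2 = k from rfl,
    Nat.add_sub_cancel, Pi.pow_apply]
  have hx0 : x ≠ 0 := hx.1.ne'
  have hr0 : r x ≠ 0 := hrx.ne'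
  push_cast
  field_simp
  ring

theorem antitoneOn_tstress_sub_log (hr : RadialSol n κ h' r r' r'') (hn : 2 ≤ n) (hκ : 0 ≤ κ) :
    AntitoneOn (fun s => Tstress n κ h' (r' s) (r s / s) - ((n : ℝ) - 1) * κ * log s)
      (Ioc 0 1) := by
  have hT := fun x (hx : x ∈ Ioc (0 : ℝ) 1) => hr.hasDerivWithinAt_tstress hn hx
  refine antitoneOn_of_hasDerivWithinAt_nonpos
    (f' := fun x => ((n : ℝ) - 1) * κ * (x⁻¹ - x ^ (n - 1) * r' x ^ n / r x ^ n)
      - ((n : ℝ) - 1) * κ * x⁻¹) (convex_Ioc 0 1)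
    (fun x hx => (hT x hx).continuousWithinAt.sub
      ((continuousAt_log hx.1.ne').continuousWithinAt.const_mul _)) (fun x hx => ?_)
    (fun x hx => ?_)
  all_goals rw [interior_Ioc] at hx
  · rw [interior_Ioc]
    exact ((hT x (Ioo_subset_Ioc_self hx)).mono Ioo_subset_Ioc_self).sub
      ((hasDerivAt_log hx.1.ne').const_mul _).hasDerivWithinAt
  · have hx' := Ioo_subset_Ioc_self hx
    have := hr.pos x hx'
    have := hr.derivPos x hx'
    have := hx.1
    rw [mul_sub, sub_sub_cancel_left, neg_nonpos]
    exact mul_nonneg (mul_nonneg (sub_nonneg.2 (Nat.one_le_cast.2 (by omega))) hκ) (by positivity)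

theorem monotoneOn (hr : RadialSol n κ h' r r' r'') (hcont : ContinuousOn r (Icc 0 1)) :
    MonotoneOn r (Icc 0 1) := by
  refine monotoneOn_of_hasDerivWithinAt_nonneg (convex_Icc 0 1) hcont (f' := r')
    (fun x hx => ?_) (fun x hx => ?_)
  all_goals rw [interior_Icc] at hx
  · rw [interior_Icc]
    exact (hr.hasDeriv x (Ioo_subset_Ioc_self hx)).mono Ioo_subset_Ioc_self
  · exact (hr.derivPos x (Ioo_subset_Ioc_self hx)).le

theorem apply_zero_le_div (hr : RadialSol n κ h' r r' r'') (hcont : ContinuousOn r (Icc 0 1))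
    {R : ℝ} (hR : R ∈ Ioc 0 1) : r 0 ≤ r R / R :=
  (hr.monotoneOn hcont (left_mem_Icc.2 zero_le_one) (Ioc_subset_Icc_self hR) hR.1.le).trans
    (le_div_self (hr.pos R hR).le hR.1 hR.2)

theorem del_pos (hr : RadialSol n κ h' r r' r'') {R : ℝ} (hR : R ∈ Ioc 0 1) :
    0 < del n r r' R :=
  mul_pos (hr.derivPos R hR) (pow_pos (div_pos (hr.pos R hR) hR.1) _)

theorem continuousOn_del (hr : RadialSol n κ h' r r' r'') :
    ContinuousOn (del n r r') (Ioc 0 1) := by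
  have hr₀ : ContinuousOn r (Ioc 0 1) := fun R hR => (hr.hasDeriv R hR).continuousWithinAt
  have hr₁ : ContinuousOn r' (Ioc 0 1) := fun R hR => (hr.hasDeriv2 R hR).continuousWithinAt
  exact hr₁.mul ((hr₀.div continuousOn_id fun R hR => hR.1.ne').pow _)

theorem div_le_of_del_le (hr : RadialSol n κ h' r r' r'') (hn : 1 ≤ n)
    (hcont : ContinuousOn r (Icc 0 1)) (hcav : 0 < r 0) {M : ℝ}
    (hM : ∀ R ∈ Ioc (0 : ℝ) 1, del n r r' R ≤ M) {R : ℝ} (hR : R ∈ Ioc 0 1) :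
    r' R / (r R / R) ≤ M / r 0 ^ n := by
  have hv : 0 < r R / R := div_pos (hr.pos R hR) hR.1
  have hdiv : r' R / (r R / R) = del n r r' R / (r R / R) ^ n := by
    rw [del, ← Nat.sub_add_cancel hn, pow_succ, Nat.add_sub_cancel]
    field_simp
  rw [hdiv]
  exact div_le_div₀ ((hr.del_pos hR).le.trans (hM R hR)) (hM R hR) (pow_pos hcav n)
    (pow_le_pow_left₀ hcav.le (hr.apply_zero_le_div hcont hR) n)

theorem exists_le_deriv_del (hr : RadialSol n κ h' r r' r'') (hn : 2 ≤ n) (hκ : 0 ≤ κ)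
    (hcont : ContinuousOn r (Icc 0 1)) (hcav : 0 < r 0) {M : ℝ}
    (hM : ∀ R ∈ Ioc (0 : ℝ) 1, del n r r' R ≤ M) :
    ∃ A, ∀ R ∈ Ioc (0 : ℝ) 1, A + ((n : ℝ) - 1) * κ * log R ≤ h' (del n r r' R) := by
  refine ⟨Tstress n κ h' (r' 1) (r 1 / 1) - κ * (M / r 0 ^ n) ^ (n - 1), fun R hR => ?_⟩
  have hstress := hr.antitoneOn_tstress_sub_log hn hκ hR (right_mem_Ioc.2 one_pos) hR.2
  have hratio : (r' R / (r R / R)) ^ (n - 1) ≤ (M / r 0 ^ n) ^ (n - 1) :=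
    pow_le_pow_left₀ (div_pos (hr.derivPos R hR) (div_pos (hr.pos R hR) hR.1)).le
      (hr.div_le_of_del_le (by omega) hcont hcav hM hR) _
  simp only [log_one, mul_zero, sub_zero] at hstress
  have : Tstress n κ h' (r' R) (r R / R) = κ * (r' R / (r R / R)) ^ (n - 1) + h' (del n r r' R) :=
    rfl
  nlinarith [mul_le_mul_of_nonneg_left hratio hκ]

theorem exists_h_del_le_sub_mul_log (hr : RadialSol n κ h' r r' r'') {h h'' : ℝ → ℝ}
    (hh : GoodH h h' h'') (hn : 2 ≤ n) (hκ : 0 ≤ κ) {γ d₀ K₁ K₂ : ℝ} (hγ : -1 < γ)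
    (hd₀ : 0 < d₀) (hK₁ : 0 < K₁) (hpp : ∀ d : ℝ, 0 < d → d ≤ d₀ → K₁ / d ^ (γ + 2) ≤ h'' d)
    (hle : ∀ d : ℝ, 0 < d → d ≤ d₀ → h d ≤ K₂ / d ^ γ) (hcont : ContinuousOn r (Icc 0 1))
    (hcav : 0 < r 0) {M : ℝ} (hM : ∀ R ∈ Ioc (0 : ℝ) 1, del n r r' R ≤ M) :
    ∃ a b, ∀ R ∈ Ioc (0 : ℝ) 1, h (del n r r' R) ≤ a - b * log R := by
  obtain ⟨A, C, hC, hsmall⟩ := hh.exists_le_mul_sub_deriv hγ hd₀ hK₁ hpp hle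
  obtain ⟨A', hA'⟩ := hr.exists_le_deriv_del hn hκ hcont hcav hM
  obtain ⟨C₀, hC₀⟩ := (isCompact_Icc (a := d₀) (b := M)).bddAbove_image
    (hh.continuousOn.mono fun d hd => hd₀.trans_le hd.1)
  refine ⟨max C₀ (C * (A - A')), C * (((n : ℝ) - 1) * κ), fun R hR => ?_⟩
  have hb : 0 ≤ C * (((n : ℝ) - 1) * κ) :=
    mul_nonneg hC (mul_nonneg (sub_nonneg.2 (Nat.one_le_cast.2 (by omega))) hκ)
  have hlog : log R ≤ 0 := log_nonpos hR.1.le hR.2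
  rcases le_or_gt (del n r r' R) d₀ with hδ | hδ
  · have := mul_le_mul_of_nonneg_left (hA' R hR) hC
    linarith [hsmall _ ⟨hr.del_pos hR, hδ⟩, le_max_right C₀ (C * (A - A'))]
  · have := hC₀ ⟨_, ⟨hδ.le, hM R hR⟩, rfl⟩
    nlinarith [le_max_left C₀ (C * (A - A'))]

end RadialSol

theorem stmt5_general (n : ℕ) (hn : 2 ≤ n) (κ : ℝ) (hκ : 0 < κ)
    (h h' h'' : ℝ → ℝ) (hh : GoodH h h' h'')
    (r r' r'' : ℝ → ℝ) (hr : RadialSol n κ h' r r' r'')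
    (γ d₀ K₁ K₂ : ℝ) (hγ : 0 < γ) (hd₀ : 0 < d₀) (hK₁ : 0 < K₁)
    (hpp_bound : ∀ d : ℝ, 0 < d → d ≤ d₀ →
      K₁ / d ^ (γ + 2) ≤ h'' d ∧ h'' d ≤ K₂ / d ^ (γ + 2))
    (h_bound : ∀ d : ℝ, 0 < d → d ≤ d₀ → K₁ / d ^ γ ≤ h d ∧ h d ≤ K₂ / d ^ γ)
    (hcont : ContinuousOn r (Set.Icc 0 1)) (hcav : 0 < r 0)
    (hbdd : ∃ M : ℝ, ∀ R ∈ Set.Ioc (0:ℝ) 1, del n r r' R ≤ M) :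
    IntegrableOn (fun R => R ^ (n - 1) * h (del n r r' R)) (Set.Ioc 0 1) := by
  obtain ⟨M, hM⟩ := hbdd
  obtain ⟨a, b, hab⟩ := hr.exists_h_del_le_sub_mul_log hh hn hκ.le (by linarith) hd₀ hK₁
    (fun d hd hdd₀ => (hpp_bound d hd hdd₀).1) (fun d hd hdd₀ => (h_bound d hd hdd₀).2) hcont
    hcav hM
  refine integrableOn_Ioc_of_abs_le_sub_mul_log (a := a) (b := b)
    ((continuousOn_pow _).mul (hh.continuousOn.comp hr.continuousOn_del fun R hR => hr.del_pos hR))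
    fun R hR => ?_
  have hδ := hh.nonneg _ (hr.del_pos hR)
  rw [abs_of_nonneg (mul_nonneg (pow_nonneg hR.1.le _) hδ)]
  exact (mul_le_of_le_one_left hδ (pow_le_one₀ hR.1.le hR.2)).trans (hab R hR)

/-- under power-law bounds on `h''` and `h` near `0`, the integral
`∫₀¹ R^{n−1} h(δ(R)) dR` is finite for a cavitating solution. -/
theorem stmt5 (n : ℕ) (hn : 2 ≤ n) (κ : ℝ) (hκ : 0 < κ)
    (h h' h'' : ℝ → ℝ) (hh : GoodH h h' h'')
    (r r' r'' : ℝ → ℝ) (hr : RadialSol n κ h' r r' r'')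
    (γ d₀ K₁ K₂ : ℝ) (hγ : 0 < γ) (hd₀ : 0 < d₀) (hK₁ : 0 < K₁) (hK₁₂ : K₁ ≤ K₂)
    (hpp_bound : ∀ d : ℝ, 0 < d → d ≤ d₀ →
      K₁ / d ^ (γ + 2) ≤ h'' d ∧ h'' d ≤ K₂ / d ^ (γ + 2))
    (h_bound : ∀ d : ℝ, 0 < d → d ≤ d₀ → K₁ / d ^ γ ≤ h d ∧ h d ≤ K₂ / d ^ γ)
    (hcont : ContinuousOn r (Set.Icc 0 1)) (hcav : 0 < r 0)
    (hbdd : ∃ M : ℝ, ∀ R ∈ Set.Ioc (0:ℝ) 1, del n r r' R ≤ M) :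
    IntegrableOn (fun R => R ^ (n - 1) * h (del n r r' R)) (Set.Ioc 0 1) :=
  stmt5_general n hn κ hκ h h' h'' hh r r' r'' hr γ d₀ K₁ K₂ hγ hd₀ hK₁ hpp_bound h_bound hcont hcav
    hbdd
end
end

section
/- Assume h satisfies the control condition: there exist K, γ₀ > 0 such that |d·h'(c·d)| ≤ K(h(d)+1) for all d > 0 and all c with |c−1| ≤ γ₀, and the growth conditions: there exist γ > 0, d₀ > 0, 0 < K₁ ≤ K₂ with K₁/d^{γ+2} ≤ h''(d) ≤ K₂/d^{γ+2} and K₁/d^{γ} ≤ h(d) ≤ K₂/d^{γ} for 0 < d ≤ d₀. Let r ∈ C²((0,1]) ∩ C([0,1]) with r'(R) > 0 solve the radial equilibrium equation with r(0) > 0, r(1) = λ, and δ bounded on (0,1]. Then the modified energy Î(r) := lim_{ε→0⁺} [ ∫_ε¹ R^{n−1} Φ(r'(R), r(R)/R,…,r(R)/R) dR − (κ(n−1)/n) r(ε)ⁿ ln(r(ε)/ε) ] exists, is finite, and equals (1/n)[ Φ(r'(1), λ, …, λ) − r'(1) Φ_{,1}(r(1)) + λⁿ T(r(1)) ] − (κ(n−1)/n²)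 r(0)ⁿ − (r(0)ⁿ/n) · lim_{ε→0⁺} [ T(r(ε)) + κ(n−1) ln(r(ε)/ε) ]. -/
open Real MeasureTheory Filter Set
open scoped ENNReal NNReal

noncomputable section

/-!
Two exact identities drive the argument. Invariance of the energy under the dilations
`R ↦ cR, r ↦ cr` yields, along any solution of the equilibrium equation, the conservation law
`(R^n Φ + (r − R r') R^{n−1} Φ_{,1})' = n R^{n−1} Φ`, so the energy on `[ε, 1]` is a difference of
boundary terms. Differentiating `g = T + κ(n−1) ln(r/R)` with the equilibrium equation, the
`h'`-terms cancel and `g' = κ(n−1)(r'/r)(1 − (R r'/r)^{n−1})`. As `r` increases from `r(0) > 0`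
and `δ` is bounded, `r'` is bounded, hence so is `g'`, and `g` has a limit at `0`. Consequently
`εⁿ h'(δ(ε)) → 0`, by convexity of `h` also `εⁿ h(δ(ε)) → 0`, and the boundary term at `ε`
converges to the stated expression.
-/

open Topology

theorem integral_Ioc_eq_sub_of_hasDerivWithinAt {F f : ℝ → ℝ} {a b ε : ℝ} (haε : a < ε)
    (hεb : ε ≤ b) (hF : ∀ x ∈ Ioc a b, HasDerivWithinAt F (f x) (Ioc a b) x)
    (hf : ContinuousOn f (Ioc a b)) :
    ∫ x in Ioc ε b, f x = F b - F ε := by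
  have hsub : Icc ε b ⊆ Ioc a b := fun x hx => ⟨haε.trans_le hx.1, hx.2⟩
  rw [← intervalIntegral.integral_of_le hεb]
  refine intervalIntegral.integral_eq_sub_of_hasDeriv_right_of_le hεb
    (fun x hx => ((hF x (hsub hx)).continuousWithinAt).mono hsub) (fun x hx => ?_)
    ((hf.mono hsub).intervalIntegrable_of_Icc hεb)
  exact ((hF x (hsub (Ioo_subset_Icc_self hx))).hasDerivAt
    (Ioc_mem_nhds (haε.trans hx.1) hx.2)).hasDerivWithinAt

theorem LipschitzOnWith.exists_tendsto_nhdsWithin {α : Type*} [PseudoMetricSpace α] {f : α → ℝ}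
    {K : ℝ≥0} {s : Set α} (hf : LipschitzOnWith K f s) (a : α) :
    ∃ l, Tendsto f (𝓝[s] a) (𝓝 l) := by
  obtain ⟨g, hg, hfg⟩ := hf.extend_real
  exact ⟨g a, (hg.continuous.continuousWithinAt (s := s)).tendsto.congr'
    (eventuallyEq_nhdsWithin_of_eqOn hfg).symm⟩

theorem exists_tendsto_nhdsGT_of_hasDerivWithinAt_Ioc {f f' : ℝ → ℝ} {a b B : ℝ} (hab : a < b)
    (hf : ∀ x ∈ Ioc a b, HasDerivWithinAt f (f' x) (Ioc a b) x)
    (hB : ∀ x ∈ Ioc a b, |f' x| ≤ B) :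
    ∃ l, Tendsto f (𝓝[>] a) (𝓝 l) := by
  have hB₀ : 0 ≤ B := (abs_nonneg _).trans (hB b (right_mem_Ioc.2 hab))
  have hlip : LipschitzOnWith B.toNNReal f (Ioc a b) :=
    (convex_Ioc a b).lipschitzOnWith_of_nnnorm_hasDerivWithin_le hf fun x hx => by
      rw [← NNReal.coe_le_coe, coe_nnnorm, Real.coe_toNNReal _ hB₀]
      exact hB x hx
  rw [← nhdsWithin_Ioc_eq_nhdsGT hab]
  exact hlip.exists_tendsto_nhdsWithin a

theorem tendsto_pow_nhdsGT_zero {n : ℕ} (hn : n ≠ 0) :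
    Tendsto (fun ε : ℝ => ε ^ n) (𝓝[>] 0) (𝓝 0) :=
  tendsto_nhdsWithin_of_tendsto_nhds ((continuous_pow n).tendsto' 0 0 (zero_pow hn))

theorem tendsto_pow_mul_log_div_nhdsGT {f : ℝ → ℝ} {a : ℝ} {n : ℕ} (hn : n ≠ 0)
    (hf : Tendsto f (𝓝[>] 0) (𝓝 a)) (ha : a ≠ 0) :
    Tendsto (fun ε => ε ^ n * Real.log (f ε / ε)) (𝓝[>] 0) (𝓝 0) := by
  have hlog : Tendsto (fun ε => Real.log ε * ε ^ n) (𝓝[>] 0) (𝓝 0) := by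
    simpa only [Real.rpow_natCast] using tendsto_log_mul_rpow_nhdsGT_zero (r := n) (by positivity)
  have hlim :=
    ((tendsto_pow_nhdsGT_zero hn).mul ((Real.continuousAt_log ha).tendsto.comp hf)).sub hlog
  rw [zero_mul, sub_zero] at hlim
  refine hlim.congr' ?_
  filter_upwards [self_mem_nhdsWithin, hf.eventually_ne ha] with ε hε hfε
  simp only [Function.comp_apply, Real.log_div hfε (ne_of_gt hε)]
  ring

theorem GoodH.monotoneOn_deriv {h h' h'' : ℝ → ℝ} (hh : GoodH h h' h'') : MonotoneOn h' (Ioi 0) :=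
  monotoneOn_of_hasDerivWithinAt_nonneg (convex_Ioi 0)
    (fun d hd => (hh.deriv2 d hd).continuousAt.continuousWithinAt)
    (fun d hd => (hh.deriv2 d (interior_subset hd)).hasDerivWithinAt)
    (fun d hd => (hh.hpp_pos d (interior_subset hd)).le)

theorem GoodH.deriv_mul_sub_le {h h' h'' : ℝ → ℝ} (hh : GoodH h h' h'') {d b : ℝ} (hd : 0 < d)
    (hdb : d ≤ b) : h' d * (b - d) ≤ h b - h d := by
  have hsub : Icc d b ⊆ Ioi 0 := fun x hx => hd.trans_le hx.1
  refine (convex_Icc d b).mul_sub_le_image_sub_of_le_deriv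
    (fun x hx => (hh.deriv1 x (hsub hx)).continuousAt.continuousWithinAt)
    (fun x hx => (hh.deriv1 x (hsub (interior_subset hx))).differentiableAt.differentiableWithinAt)
    (fun x hx => ?_) d (left_mem_Icc.2 hdb) b (right_mem_Icc.2 hdb) hdb
  rw [interior_Icc] at hx
  rw [(hh.deriv1 x (hd.trans hx.1)).deriv]
  exact hh.monotoneOn_deriv hd (hd.trans hx.1) hx.1.le

theorem GoodH.tendsto_mul_comp_of_tendsto_mul_deriv_comp {h h' h'' : ℝ → ℝ} (hh : GoodH h h' h'')
    {α : Type*} {l : Filter α} {c δ : α → ℝ} {M : ℝ} (hδ : ∀ᶠ x in l, 0 < δ x ∧ δ x ≤ M)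
    (hc₀ : ∀ᶠ x in l, 0 ≤ c x) (hc : Tendsto c l (𝓝 0))
    (hch' : Tendsto (fun x => c x * h' (δ x)) l (𝓝 0)) :
    Tendsto (fun x => c x * h (δ x)) l (𝓝 0) := by
  have hupper := (hc.mul_const (h M)).add (hch'.abs.const_mul M)
  rw [zero_mul, abs_zero, mul_zero, add_zero] at hupper
  refine tendsto_of_tendsto_of_tendsto_of_le_of_le' tendsto_const_nhds hupper ?_ ?_
  · filter_upwards [hδ, hc₀] with x hδx hcx
    exact mul_nonneg hcx (hh.nonneg _ hδx.1)
  · filter_upwards [hδ, hc₀] with x ⟨hδ₀, hδM⟩ hcx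
    have hconv := mul_le_mul_of_nonneg_left (hh.deriv_mul_sub_le hδ₀ hδM) hcx
    have habs : -(c x * h' (δ x) * (M - δ x)) ≤ M * |c x * h' (δ x)| := by
      rw [← neg_mul, mul_comm M]
      exact mul_le_mul (neg_le_abs _) (by linarith) (by linarith) (abs_nonneg _)
    linarith

theorem Phi1_eq_pow_mul_Tstress {n : ℕ} {κ q v : ℝ} (h' : ℝ → ℝ) (hv : v ≠ 0) :
    Phi1 n κ h' q v = v ^ (n - 1) * Tstress n κ h' q v := by
  simp only [Phi1, Tstress, div_pow]
  field_simp

theorem Tstress_div_eq {n : ℕ} {κ q x R : ℝ} (h' : ℝ → ℝ) (hx : x ≠ 0) (hR : R ≠ 0) :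
    Tstress n κ h' q (x / R) = R ^ (n - 1) * Phi1 n κ h' q (x / R) / x ^ (n - 1) := by
  rw [Phi1_eq_pow_mul_Tstress h' (div_ne_zero hx hR), div_pow]
  field_simp

theorem hasDerivWithinAt_Phi {n : ℕ} (hn : 1 ≤ n) (κ : ℝ) {h h' q v : ℝ → ℝ} {q₁ v₁ x : ℝ}
    {s : Set ℝ} (hq : HasDerivWithinAt q q₁ s x) (hv : HasDerivWithinAt v v₁ s x)
    (hh : HasDerivAt h (h' (q x * v x ^ (n - 1))) (q x * v x ^ (n - 1))) :
    HasDerivWithinAt (fun y => Phi n κ h (q y) (v y))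
      (Phi1 n κ h' (q x) (v x) * q₁ + ((n : ℝ) - 1) * Phi2 n κ h' (q x) (v x) * v₁) s x := by
  obtain ⟨m, rfl⟩ := Nat.exists_eq_add_of_le' hn
  have hPhi : (fun y => Phi (m + 1) κ h (q y) (v y)) = fun y =>
      κ / (m + 1 : ℕ) * (q y ^ (m + 1) + m * v y ^ (m + 1)) + h (q y * v y ^ m) := by
    funext y
    simp only [Phi, Nat.add_sub_cancel]
    push_cast
    ring
  rw [hPhi]
  refine ((((hq.fun_pow (m + 1)).add ((hv.fun_pow (m + 1)).const_mul (m : ℝ))).const_mul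
    (κ / (m + 1 : ℕ))).add (hh.comp_hasDerivWithinAt x (hq.fun_mul (hv.fun_pow m)))).congr_deriv ?_
  simp only [Phi1, Phi2, Nat.add_sub_cancel, show m + 1 - 2 = m - 1 by omega]
  push_cast
  field_simp
  ring

/-- Noether current of the dilation symmetry `R ↦ cR, r ↦ cr` of the radial energy. -/
def noetherFlux (n : ℕ) (κ : ℝ) (h h' r r' : ℝ → ℝ) (R : ℝ) : ℝ :=
  R ^ n * Phi n κ h (r' R) (r R / R)
    + (r R - R * r' R) * (R ^ (n - 1) * Phi1 n κ h' (r' R) (r R / R))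

def stressLog (n : ℕ) (κ : ℝ) (h' r r' : ℝ → ℝ) (R : ℝ) : ℝ :=
  Tstress n κ h' (r' R) (r R / R) + κ * ((n : ℝ) - 1) * Real.log (r R / R)

variable {n : ℕ} {κ : ℝ} {h h' r r' r'' : ℝ → ℝ}

theorem RadialSol.del_pos_s8 (hr : RadialSol n κ h' r r' r'') {R : ℝ} (hR : R ∈ Ioc 0 1) :
    0 < del n r r' R :=
  mul_pos (hr.derivPos R hR) (pow_pos (div_pos (hr.pos R hR) hR.1) _)

theorem RadialSol.hasDerivWithinAt_div_id (hr : RadialSol n κ h' r r' r'') {R : ℝ}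
    (hR : R ∈ Ioc 0 1) :
    HasDerivWithinAt (fun s => r s / s) ((r' R * R - r R * 1) / R ^ 2) (Ioc 0 1) R :=
  (hr.hasDeriv R hR).div (hasDerivWithinAt_id R _) hR.1.ne'

theorem RadialSol.hasDerivWithinAt_noetherFlux (hn : 2 ≤ n)
    (hh : ∀ d, 0 < d → HasDerivAt h (h' d) d) (hr : RadialSol n κ h' r r' r'') {R : ℝ}
    (hR : R ∈ Ioc 0 1) :
    HasDerivWithinAt (noetherFlux n κ h h' r r') (n * (R ^ (n - 1) * Phi n κ h (r' R) (r R / R)))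
      (Ioc 0 1) R := by
  have hPhi := hasDerivWithinAt_Phi (by omega) κ (hr.hasDeriv2 R hR) (hr.hasDerivWithinAt_div_id hR)
    (hh _ (hr.del_pos_s8 hR))
  have hlin := (hr.hasDeriv R hR).sub ((hasDerivWithinAt_id R _).mul (hr.hasDeriv2 R hR))
  refine ((((hasDerivWithinAt_id R _).fun_pow n).mul hPhi).add
    (hlin.mul (hr.equil R hR))).congr_deriv ?_
  obtain ⟨m, rfl⟩ := Nat.exists_eq_add_of_le' hn
  have hR0 : R ≠ 0 := hR.1.ne'
  simp only [id, Pi.sub_apply, Pi.mul_apply, Nat.add_sub_cancel, show m + 2 - 1 = m + 1 by omega]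
  generalize Phi (m + 2) κ h (r' R) (r R / R) = P
  generalize Phi1 (m + 2) κ h' (r' R) (r R / R) = P₁
  generalize Phi2 (m + 2) κ h' (r' R) (r R / R) = P₂
  push_cast
  field_simp
  ring

theorem RadialSol.hasDerivWithinAt_stressLog (hn : 2 ≤ n) (hr : RadialSol n κ h' r r' r'')
    {R : ℝ} (hR : R ∈ Ioc 0 1) :
    HasDerivWithinAt (stressLog n κ h' r r')
      (κ * ((n : ℝ) - 1) * (r' R / r R) * (1 - (R * r' R / r R) ^ (n - 1))) (Ioc 0 1) R := by
  have hrR := hr.pos R hR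
  have hT := (hr.equil R hR).div ((hr.hasDeriv R hR).fun_pow (n - 1)) (pow_ne_zero _ hrR.ne')
  have hlog := (hr.hasDerivWithinAt_div_id hR).log (div_pos hrR hR.1).ne'
  have heq : EqOn (stressLog n κ h' r r') (fun s => s ^ (n - 1) * Phi1 n κ h' (r' s) (r s / s)
      / r s ^ (n - 1) + κ * ((n : ℝ) - 1) * Real.log (r s / s)) (Ioc 0 1) := fun s hs => by
    simp only [stressLog, Tstress_div_eq h' (hr.pos s hs).ne' hs.1.ne']
  refine ((hT.add (hlog.const_mul (κ * ((n : ℝ) - 1)))).congr heq (heq hR)).congr_deriv ?_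
  obtain ⟨m, rfl⟩ := Nat.exists_eq_add_of_le' hn
  have hR0 : R ≠ 0 := hR.1.ne'
  have hr0 : r R ≠ 0 := hrR.ne'
  simp only [Phi1, Phi2, Nat.add_sub_cancel, show m + 2 - 1 = m + 1 by omega,
    show m + 1 - 1 = m by omega, div_pow]
  generalize h' (r' R * (r R / R) ^ (m + 1)) = X
  push_cast
  field_simp
  ring

theorem RadialSol.integral_Phi_sub_log_eq (hn : 2 ≤ n) (hh : ∀ d, 0 < d → HasDerivAt h (h' d) d)
    (hr : RadialSol n κ h' r r' r'') {ε : ℝ} (hε : ε ∈ Ioc 0 1) :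
    (∫ R in Ioc ε 1, R ^ (n - 1) * Phi n κ h (r' R) (r R / R))
        - κ * ((n : ℝ) - 1) / n * r ε ^ n * Real.log (r ε / ε)
      = (noetherFlux n κ h h' r r' 1 - (ε ^ n * Phi n κ h (r' ε) (r ε / ε)
          - ε ^ n * r' ε * Phi1 n κ h' (r' ε) (r ε / ε)
          + r ε ^ n * stressLog n κ h' r r' ε)) / n := by
  have hn₀ : (n : ℝ) ≠ 0 := by positivity
  have hcont : ContinuousOn (fun R => R ^ (n - 1) * Phi n κ h (r' R) (r R / R)) (Ioc 0 1) :=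
    (continuousOn_pow _).mul fun R hR => (hasDerivWithinAt_Phi (by omega) κ (hr.hasDeriv2 R hR)
      (hr.hasDerivWithinAt_div_id hR) (hh _ (hr.del_pos_s8 hR))).continuousWithinAt
  rw [integral_Ioc_eq_sub_of_hasDerivWithinAt hε.1 hε.2 (fun R hR =>
    ((hr.hasDerivWithinAt_noetherFlux hn hh hR).div_const n).congr_deriv
      (mul_div_cancel_left₀ _ hn₀)) hcont]
  obtain ⟨m, rfl⟩ := Nat.exists_eq_add_of_le' (show 1 ≤ n by omega)
  have hε₀ : ε ≠ 0 := hε.1.ne'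
  have hrε : r ε ≠ 0 := (hr.pos ε hε).ne'
  simp only [noetherFlux, stressLog, Phi1_eq_pow_mul_Tstress h' (div_ne_zero hrε hε₀), div_pow,
    Nat.add_sub_cancel]
  field_simp
  ring

theorem RadialSol.apply_zero_le (hr : RadialSol n κ h' r r' r'') (hcont : ContinuousOn r (Icc 0 1))
    {R : ℝ} (hR : R ∈ Ioc 0 1) : r 0 ≤ r R := by
  refine monotoneOn_of_hasDerivWithinAt_nonneg (convex_Icc 0 1) hcont (f' := r')
    (fun x hx => ?_) (fun x hx => ?_) (left_mem_Icc.2 zero_le_one) (Ioc_subset_Icc_self hR) hR.1.le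
  all_goals rw [interior_Icc] at hx
  · rw [interior_Icc]
    exact (hr.hasDeriv x (Ioo_subset_Ioc_self hx)).mono Ioo_subset_Ioc_self
  · exact (hr.derivPos x (Ioo_subset_Ioc_self hx)).le

theorem RadialSol.deriv_le_of_del_le (hr : RadialSol n κ h' r r' r'')
    (hcont : ContinuousOn r (Icc 0 1)) (hcav : 0 < r 0) {M : ℝ}
    (hM : ∀ R ∈ Ioc (0 : ℝ) 1, del n r r' R ≤ M) {R : ℝ} (hR : R ∈ Ioc 0 1) :
    r' R ≤ M / r 0 ^ (n - 1) := by
  have hv : r 0 ≤ r R / R :=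
    (hr.apply_zero_le hcont hR).trans (le_div_self (hr.pos R hR).le hR.1 hR.2)
  rw [le_div_iff₀ (pow_pos hcav _)]
  calc r' R * r 0 ^ (n - 1) ≤ del n r r' R :=
        mul_le_mul_of_nonneg_left (pow_le_pow_left₀ hcav.le hv _) (hr.derivPos R hR).le
    _ ≤ M := hM R hR

theorem RadialSol.exists_tendsto_stressLog (hn : 2 ≤ n) (hr : RadialSol n κ h' r r' r'')
    (hcav : 0 < r 0) (hrR : ∀ R ∈ Ioc (0 : ℝ) 1, r 0 ≤ r R) {C : ℝ}
    (hr'C : ∀ R ∈ Ioc (0 : ℝ) 1, r' R ≤ C) :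
    ∃ T, Tendsto (stressLog n κ h' r r') (𝓝[>] 0) (𝓝 T) := by
  refine exists_tendsto_nhdsGT_of_hasDerivWithinAt_Ioc one_pos
    (fun R hR => hr.hasDerivWithinAt_stressLog hn hR)
    (B := |κ * ((n : ℝ) - 1)| * (C / r 0) * (1 + (C / r 0) ^ (n - 1))) fun R hR => ?_
  have hq : 0 ≤ r' R / r R := (div_pos (hr.derivPos R hR) (hr.pos R hR)).le
  have hqC : r' R / r R ≤ C / r 0 :=
    div_le_div₀ ((hr.derivPos R hR).le.trans (hr'C R hR)) (hr'C R hR) hcav (hrR R hR)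
  have hw : R * r' R / r R = R * (r' R / r R) := mul_div_assoc _ _ _
  have hw₀ : 0 ≤ R * r' R / r R := by
    rw [hw]; exact mul_nonneg hR.1.le hq
  have hwC : R * r' R / r R ≤ C / r 0 := by
    rw [hw]; exact (mul_le_of_le_one_left hq hR.2).trans hqC
  have hsub : |1 - (R * r' R / r R) ^ (n - 1)| ≤ 1 + (C / r 0) ^ (n - 1) := by
    refine (abs_sub _ _).trans ?_
    rw [abs_one, abs_of_nonneg (pow_nonneg hw₀ _)]
    gcongr
  rw [abs_mul, abs_mul, abs_of_nonneg hq]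
  gcongr
  exact mul_nonneg (abs_nonneg _) (hq.trans hqC)

theorem tendsto_pow_mul_deriv_del (hn : 2 ≤ n) {T : ℝ}
    (hT : Tendsto (stressLog n κ h' r r') (𝓝[>] 0) (𝓝 T))
    (hr0 : Tendsto r (𝓝[>] 0) (𝓝 (r 0))) (hcav : r 0 ≠ 0)
    (hr' : Tendsto (fun ε => ε * r' ε) (𝓝[>] 0) (𝓝 0)) :
    Tendsto (fun ε => ε ^ n * h' (del n r r' ε)) (𝓝[>] 0) (𝓝 0) := by
  have hratio : Tendsto (fun ε => (ε * r' ε / r ε) ^ (n - 1)) (𝓝[>] 0) (𝓝 0) := by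
    simpa [zero_div, zero_pow (show n - 1 ≠ 0 by omega)] using (hr'.div hr0 hcav).pow (n - 1)
  have hlim := ((tendsto_pow_nhdsGT_zero (n := n) (by omega)).mul (hT.sub (hratio.const_mul κ))).sub
    ((tendsto_pow_mul_log_div_nhdsGT (n := n) (by omega) hr0 hcav).const_mul (κ * ((n : ℝ) - 1)))
  rw [zero_mul, mul_zero, sub_zero] at hlim
  refine hlim.congr fun ε => ?_
  simp only [stressLog, Tstress, del, div_div_eq_mul_div]
  ring

theorem RadialSol.tendsto_pow_mul_Phi (hn : 2 ≤ n) (hr : RadialSol n κ h' r r' r'')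
    (hh : GoodH h h' h'') {M : ℝ} (hM : ∀ R ∈ Ioc (0 : ℝ) 1, del n r r' R ≤ M)
    (hr0 : Tendsto r (𝓝[>] 0) (𝓝 (r 0))) (hr' : Tendsto (fun ε => ε * r' ε) (𝓝[>] 0) (𝓝 0))
    (hh' : Tendsto (fun ε => ε ^ n * h' (del n r r' ε)) (𝓝[>] 0) (𝓝 0)) :
    Tendsto (fun ε => ε ^ n * Phi n κ h (r' ε) (r ε / ε)) (𝓝[>] 0)
      (𝓝 (κ * ((n : ℝ) - 1) / n * r 0 ^ n)) := by
  have hIoc : ∀ᶠ ε in 𝓝[>] (0 : ℝ), ε ∈ Ioc 0 1 := Ioc_mem_nhdsGT one_pos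
  have hh₀ := hh.tendsto_mul_comp_of_tendsto_mul_deriv_comp
    (hIoc.mono fun ε hε => ⟨hr.del_pos_s8 hε, hM ε hε⟩) (hIoc.mono fun ε hε => pow_nonneg hε.1.le n)
    (tendsto_pow_nhdsGT_zero (by omega)) hh'
  have hlim := (((hr'.pow n).add ((hr0.pow n).const_mul ((n : ℝ) - 1))).const_mul (κ / n)).add hh₀
  have hval : κ / n * (0 ^ n + ((n : ℝ) - 1) * r 0 ^ n) + 0 = κ * ((n : ℝ) - 1) / n * r 0 ^ n := by
    rw [zero_pow (by omega)]; ring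
  rw [hval] at hlim
  refine hlim.congr' ?_
  filter_upwards [hIoc] with ε hε
  have hε₀ : ε ≠ 0 := hε.1.ne'
  simp only [Phi, del, div_pow]
  field_simp
  ring

theorem RadialSol.tendsto_pow_mul_deriv_mul_Phi1 (hn : 2 ≤ n) (hr : RadialSol n κ h' r r' r'')
    {M : ℝ} (hM : ∀ R ∈ Ioc (0 : ℝ) 1, del n r r' R ≤ M)
    (hr' : Tendsto (fun ε => ε * r' ε) (𝓝[>] 0) (𝓝 0))
    (hh' : Tendsto (fun ε => ε ^ n * h' (del n r r' ε)) (𝓝[>] 0) (𝓝 0)) :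
    Tendsto (fun ε => ε ^ n * r' ε * Phi1 n κ h' (r' ε) (r ε / ε)) (𝓝[>] 0) (𝓝 0) := by
  have hIoc : ∀ᶠ ε in 𝓝[>] (0 : ℝ), ε ∈ Ioc 0 1 := Ioc_mem_nhdsGT one_pos
  have hdel : IsBoundedUnder (· ≤ ·) (𝓝[>] 0) (norm ∘ del n r r') :=
    isBoundedUnder_of_eventually_le (a := M) (hIoc.mono fun ε hε => by
      simpa only [Function.comp_apply, Real.norm_of_nonneg (hr.del_pos_s8 hε).le] using hM ε hε)
  have hlim := ((hr'.pow n).const_mul κ).add (isBoundedUnder_le_mul_tendsto_zero hdel hh')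
  rw [zero_pow (by omega), mul_zero, add_zero] at hlim
  refine hlim.congr' ?_
  filter_upwards [hIoc] with ε hε
  obtain ⟨m, rfl⟩ := Nat.exists_eq_add_of_le' (show 1 ≤ n by omega)
  have hε₀ : ε ≠ 0 := hε.1.ne'
  simp only [Phi1, del, div_pow, Nat.add_sub_cancel]
  field_simp
  ring

theorem stmt8_general (n : ℕ) (hn : 2 ≤ n) (κ : ℝ)
    (h h' h'' : ℝ → ℝ) (hh : GoodH h h' h'')
    (r r' r'' : ℝ → ℝ) (hr : RadialSol n κ h' r r' r'')
    (lam : ℝ)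
    (hcont : ContinuousOn r (Set.Icc 0 1)) (hcav : 0 < r 0)
    (hbdd : ∃ M : ℝ, ∀ R ∈ Set.Ioc (0:ℝ) 1, del n r r' R ≤ M)
    (hbc : r 1 = lam) :
    ∃ Tlim I₀ : ℝ,
      Tendsto (fun ε => Tstress n κ h' (r' ε) (r ε / ε)
          + κ * ((n:ℝ) - 1) * Real.log (r ε / ε)) (nhdsWithin 0 (Set.Ioi 0)) (nhds Tlim) ∧
      Tendsto (fun ε => (∫ R in Set.Ioc ε 1, R ^ (n - 1) * Phi n κ h (r' R) (r R / R))
          - κ * ((n:ℝ) - 1) / n * (r ε) ^ n * Real.log (r ε / ε))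
        (nhdsWithin 0 (Set.Ioi 0)) (nhds I₀) ∧
      I₀ = (1 / n) * (Phi n κ h (r' 1) lam - r' 1 * Phi1 n κ h' (r' 1) lam
              + lam ^ n * Tstress n κ h' (r' 1) lam)
            - κ * ((n:ℝ) - 1) / ((n:ℝ) ^ 2) * (r 0) ^ n - (r 0) ^ n / n * Tlim := by
  obtain ⟨M, hM⟩ := hbdd
  have hIoc : ∀ᶠ ε in 𝓝[>] (0 : ℝ), ε ∈ Ioc 0 1 := Ioc_mem_nhdsGT one_pos
  have hr'C : ∀ R ∈ Ioc (0 : ℝ) 1, r' R ≤ M / r 0 ^ (n - 1) := fun R hR =>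
    hr.deriv_le_of_del_le hcont hcav hM hR
  obtain ⟨T, hT⟩ := hr.exists_tendsto_stressLog hn hcav (fun R hR => hr.apply_zero_le hcont hR) hr'C
  have hr0 : Tendsto r (𝓝[>] 0) (𝓝 (r 0)) := by
    refine (hcont 0 (left_mem_Icc.2 zero_le_one)).tendsto.mono_left ?_
    rw [← nhdsWithin_Ioc_eq_nhdsGT one_pos]
    exact nhdsWithin_mono _ Ioc_subset_Icc_self
  have hr' : Tendsto (fun ε => ε * r' ε) (𝓝[>] 0) (𝓝 0) :=
    (tendsto_nhdsWithin_of_tendsto_nhds tendsto_id).zero_mul_isBoundedUnder_le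
      (isBoundedUnder_of_eventually_le (hIoc.mono fun R hR => by
        simpa only [Function.comp_apply, Real.norm_of_nonneg (hr.derivPos R hR).le]
          using hr'C R hR))
  have hh' := tendsto_pow_mul_deriv_del hn hT hr0 hcav.ne' hr'
  have hΦ := hr.tendsto_pow_mul_Phi hn hh hM hr0 hr' hh'
  have hΦ₁ := hr.tendsto_pow_mul_deriv_mul_Phi1 hn hM hr' hh'
  have hlim := ((tendsto_const_nhds (x := noetherFlux n κ h h' r r' 1)).sub
    ((hΦ.sub hΦ₁).add ((hr0.pow n).mul hT))).div_const (n : ℝ)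
  refine ⟨T, _, hT, hlim.congr'
    (hIoc.mono fun ε hε => (hr.integral_Phi_sub_log_eq hn hh.deriv1 hε).symm), ?_⟩
  obtain ⟨m, rfl⟩ := Nat.exists_eq_add_of_le' (show 1 ≤ n by omega)
  have hlam : lam ≠ 0 := hbc ▸ (hr.pos 1 (right_mem_Ioc.2 one_pos)).ne'
  simp only [noetherFlux, hbc, div_one, one_pow, one_mul, Phi1_eq_pow_mul_Tstress h' hlam,
    Nat.add_sub_cancel]
  field_simp
  ring

/-- for a cavitating solution, the modified energy
`Î(r) = lim_{ε→0⁺} [∫_ε¹ R^{n−1}Φ dR − (κ(n−1)/n) r(ε)ⁿ ln(r(ε)/ε)]` exists, is finite,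
and is given by the stated boundary-term formula. -/
theorem stmt8 (n : ℕ) (hn : 2 ≤ n) (κ : ℝ) (hκ : 0 < κ)
    (h h' h'' : ℝ → ℝ) (hh : GoodH h h' h'')
    (r r' r'' : ℝ → ℝ) (hr : RadialSol n κ h' r r' r'')
    (K γ₀ : ℝ) (hK : 0 < K) (hγ₀ : 0 < γ₀)
    (hctrl : ∀ d : ℝ, 0 < d → ∀ c : ℝ, |c - 1| ≤ γ₀ → |d * h' (c * d)| ≤ K * (h d + 1))
    (γ d₀ K₁ K₂ : ℝ) (hγ : 0 < γ) (hd₀ : 0 < d₀) (hK₁ : 0 < K₁) (hK₁₂ : K₁ ≤ K₂)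
    (hpp_bound : ∀ d : ℝ, 0 < d → d ≤ d₀ →
      K₁ / d ^ (γ + 2) ≤ h'' d ∧ h'' d ≤ K₂ / d ^ (γ + 2))
    (h_bound : ∀ d : ℝ, 0 < d → d ≤ d₀ → K₁ / d ^ γ ≤ h d ∧ h d ≤ K₂ / d ^ γ)
    (lam : ℝ)
    (hcont : ContinuousOn r (Set.Icc 0 1)) (hcav : 0 < r 0)
    (hbdd : ∃ M : ℝ, ∀ R ∈ Set.Ioc (0:ℝ) 1, del n r r' R ≤ M)
    (hbc : r 1 = lam) :
    ∃ Tlim I₀ : ℝ,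
      Tendsto (fun ε => Tstress n κ h' (r' ε) (r ε / ε)
          + κ * ((n:ℝ) - 1) * Real.log (r ε / ε)) (nhdsWithin 0 (Set.Ioi 0)) (nhds Tlim) ∧
      Tendsto (fun ε => (∫ R in Set.Ioc ε 1, R ^ (n - 1) * Phi n κ h (r' R) (r R / R))
          - κ * ((n:ℝ) - 1) / n * (r ε) ^ n * Real.log (r ε / ε))
        (nhdsWithin 0 (Set.Ioi 0)) (nhds I₀) ∧
      I₀ = (1 / n) * (Phi n κ h (r' 1) lam - r' 1 * Phi1 n κ h' (r' 1) lam
              + lam ^ n * Tstress n κ h' (r' 1) lam)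
            - κ * ((n:ℝ) - 1) / ((n:ℝ) ^ 2) * (r 0) ^ n - (r 0) ^ n / n * Tlim :=
  stmt8_general n hn κ h h' h'' hh r r' r'' hr lam hcont hcav hbdd hbc

end
end
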